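/- Let g = g₀ ⊕ g₁ be a non-degenerate filiform Lie superalgebra over ℂ with dim g₀ = 7 and dim g₁ = 3. If g is naturally graded, then g is isomorphic to the Lie superalgebra with basis {X₀,X₁,…,X₆,Y₁,Y₂,Y₃} and law [X₀,X_i] = X_{i+1} for 1 ≤ i ≤ 5, [X₀,Y_j] = Y_{j+1} for 1 ≤ j ≤ 2, (Y₁,Y₁) = 6X₂, (Y₁,Y₂) = 3X₃, (Y₁,Y₃) = X₄, (Y₂,Y₂) = 2X₄, (Y₂,Y₃) = X₅, (Y₃,Y₃) = X₆. -/
import Mathlib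


/-- The sign `(-1)^(i·j)` for parities `i j : ZMod 2`, as a complex scalar. -/
def ssign (i j : ZMod 2) : ℂ := if i = 1 ∧ j = 1 then -1 else 1

/-- A (complex) Lie superalgebra structure on the vector space `V`: a ℤ₂-grading
`g` whose parts are complementary, together with an even bilinear bracket which is
super skew-symmetric and satisfies the super Jacobi identity on homogeneous elements. -/
structure LieSuperAlg (V : Type*) [AddCommGroup V] [Module ℂ V] where
  g : ZMod 2 → Submodule ℂ V
  bk : V →ₗ[ℂ] V →ₗ[ℂ] V
  compl : IsCompl (g 0) (g 1)
  grading : ∀ i j : ZMod 2, ∀ x ∈ g i, ∀ y ∈ g j, bk x y ∈ g (i + j)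
  skew : ∀ i j : ZMod 2, ∀ x ∈ g i, ∀ y ∈ g j, bk x y = -(ssign i j • bk y x)
  jacobi : ∀ i j k : ZMod 2, ∀ x ∈ g i, ∀ y ∈ g j, ∀ z ∈ g k,
    ssign k i • bk x (bk y z) + ssign i j • bk y (bk z x) + ssign j k • bk z (bk x y) = 0

namespace LieSuperAlg

variable {V : Type*} [AddCommGroup V] [Module ℂ V]

/-- The descending sequences `C⁰(g_i) = g_i`, `C^{k+1}(g_i) = [g₀, C^k(g_i)]`. -/
def C (A : LieSuperAlg V) (i : ZMod 2) : ℕ → Submodule ℂ V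
  | 0 => A.g i
  | k + 1 => Submodule.span ℂ {z | ∃ x ∈ A.g 0, ∃ y ∈ C A i k, z = A.bk x y}

/-- The descending central sequence of the whole superalgebra. -/
def DC (A : LieSuperAlg V) : ℕ → Submodule ℂ V
  | 0 => ⊤
  | k + 1 => Submodule.span ℂ {z | ∃ x ∈ DC A k, ∃ y : V, z = A.bk x y}

/-- Nilpotency: the descending central sequence reaches zero. -/
def IsNilpotent (A : LieSuperAlg V) : Prop := ∃ k, A.DC k = ⊥

/-- `A` is filiform with parameters `(n, m)`: it is nilpotent, `dim g₀ = n + 1`,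
`dim g₁ = m`, and the super-nilindex is `(n, m)` (the maximal one). -/
def IsFiliform (A : LieSuperAlg V) (n m : ℕ) : Prop :=
  A.IsNilpotent ∧ Module.finrank ℂ (A.g 0) = n + 1 ∧ Module.finrank ℂ (A.g 1) = m ∧
    A.C 0 (n - 1) ≠ ⊥ ∧ A.C 1 (m - 1) ≠ ⊥ ∧ A.C 0 n = ⊥ ∧ A.C 1 m = ⊥

/-- Non-degeneracy: the bracket does not vanish identically on `g₁ × g₁`. -/
def NonDegenerate (A : LieSuperAlg V) : Prop :=
  ∃ x ∈ A.g 1, ∃ y ∈ A.g 1, A.bk x y ≠ 0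

/-- `A` is naturally graded: there are subspaces `W a i` (`i ≥ 1`, parity `a`), splitting
the filtrations `C` (so that `W a i ≅ C^{i-1}(g_a)/C^i(g_a)` and `g ≅ gr(g)` in the
natural way) and compatible with the bracket (so `gr(g)` is a graded Lie superalgebra,
`[gⁱ, gʲ] ⊆ g^{i+j}`).  For finite-dimensional nilpotent superalgebras this is
equivalent to the textbook definition `g ≅ gr(g)` with `gr(g)` graded. -/
def NaturallyGraded (A : LieSuperAlg V) : Prop :=
  ∃ W : ZMod 2 → ℕ → Submodule ℂ V,
    (∀ a, W a 0 = ⊥) ∧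
    (∀ a k, A.C a k = W a (k + 1) ⊔ A.C a (k + 1)) ∧
    (∀ a k, W a (k + 1) ⊓ A.C a (k + 1) = ⊥) ∧
    (∀ a b : ZMod 2, ∀ i j : ℕ, ∀ x ∈ W a i, ∀ y ∈ W b j, A.bk x y ∈ W (a + b) (i + j))

/-- `X 0, …, X n` and `Y 1, …, Y m` form an adapted basis of the superalgebra:
the `X i` are even, the `Y j` are odd, and together they form a basis of `V`. -/
def IsAdaptedBasis (A : LieSuperAlg V) (n m : ℕ) (X Y : ℕ → V) : Prop :=
  (∀ i, i ≤ n → X i ∈ A.g 0) ∧ (∀ j, 1 ≤ j → j ≤ m → Y j ∈ A.g 1) ∧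
  LinearIndependent ℂ
    (Sum.elim (fun i : Fin (n + 1) => X i.val) (fun j : Fin m => Y (j.val + 1))) ∧
  Submodule.span ℂ
    (Set.range (Sum.elim (fun i : Fin (n + 1) => X i.val) (fun j : Fin m => Y (j.val + 1)))) = ⊤

end LieSuperAlg

open Module Submodule LieSuperAlg

section Aux

variable {V : Type*} [AddCommGroup V] [Module ℂ V]

structure GSetup (V : Type*) [AddCommGroup V] [Module ℂ V] where
  A : LieSuperAlg V
  W : ZMod 2 → ℕ → Submodule ℂ V
  hWC : ∀ a k, A.C a k = W a (k+1) ⊔ A.C a (k+1)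
  hWd : ∀ a k, W a (k+1) ⊓ A.C a (k+1) = ⊥
  hWb : ∀ a b : ZMod 2, ∀ i j : ℕ, ∀ x ∈ W a i, ∀ y ∈ W b j, A.bk x y ∈ W (a+b) (i+j)
  hC05 : A.C 0 5 ≠ ⊥
  hC06 : A.C 0 6 = ⊥
  hC12 : A.C 1 2 ≠ ⊥
  hC13 : A.C 1 3 = ⊥
  hg0 : Module.finrank ℂ (A.g 0) = 7
  hg1 : Module.finrank ℂ (A.g 1) = 3

namespace GSetup

variable (S : GSetup V)

lemma C_succ (a : ZMod 2) (k : ℕ) :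
    S.A.C a (k+1) = Submodule.span ℂ {z | ∃ x ∈ S.A.g 0, ∃ y ∈ S.A.C a k, z = S.A.bk x y} := rfl

lemma C_zero (a : ZMod 2) : S.A.C a 0 = S.A.g a := rfl

lemma C_succ_le (a : ZMod 2) (k : ℕ) : S.A.C a (k+1) ≤ S.A.C a k := by
  conv_rhs => rw [S.hWC a k]
  exact le_sup_right

lemma C_le (a : ZMod 2) {k l : ℕ} (h : k ≤ l) : S.A.C a l ≤ S.A.C a k := by
  induction l with
  | zero => simp_all
  | succ n ih =>
    rcases Nat.lt_or_ge k (n+1) with h' | h'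
    · exact (S.C_succ_le a n).trans (ih (by omega))
    · have : k = n + 1 := by omega
      subst this; exact le_rfl

lemma W_le_C (a : ZMod 2) (k : ℕ) : S.W a (k+1) ≤ S.A.C a k := by
  rw [S.hWC a k]; exact le_sup_left

lemma W_le_g (a : ZMod 2) {k : ℕ} (hk : 1 ≤ k) : S.W a k ≤ S.A.g a := by
  obtain ⟨l, rfl⟩ : ∃ l, k = l + 1 := ⟨k - 1, by omega⟩
  rw [← S.C_zero a]
  exact (S.W_le_C a l).trans (S.C_le a (Nat.zero_le l))

lemma C_stab (a : ZMod 2) (k : ℕ) (h : S.A.C a k = S.A.C a (k+1)) :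
    ∀ l, S.A.C a (k+l) = S.A.C a k := by
  intro l
  induction l with
  | zero => rfl
  | succ n ih =>
    rw [show k + (n+1) = (k+n) + 1 from rfl, S.C_succ, ih, ← S.C_succ, ← h]

lemma W0_ne_bot {k : ℕ} (hk : k ≤ 5) : S.W 0 (k+1) ≠ ⊥ := by
  intro h
  have h1 : S.A.C 0 k = S.A.C 0 (k+1) := by rw [S.hWC 0 k, h, bot_sup_eq]
  have h5 : S.A.C 0 5 = S.A.C 0 k := by
    have := S.C_stab 0 k h1 (5 - k); rwa [Nat.add_sub_cancel' hk] at this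
  have h6 : S.A.C 0 6 = S.A.C 0 k := by
    have := S.C_stab 0 k h1 (6 - k); rwa [Nat.add_sub_cancel' (by omega)] at this
  exact S.hC05 (by rw [h5, ← h6, S.hC06])

lemma W1_ne_bot {k : ℕ} (hk : k ≤ 2) : S.W 1 (k+1) ≠ ⊥ := by
  intro h
  have h1 : S.A.C 1 k = S.A.C 1 (k+1) := by rw [S.hWC 1 k, h, bot_sup_eq]
  have h5 : S.A.C 1 2 = S.A.C 1 k := by
    have := S.C_stab 1 k h1 (2 - k); rwa [Nat.add_sub_cancel' hk] at this
  have h6 : S.A.C 1 3 = S.A.C 1 k := by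
    have := S.C_stab 1 k h1 (3 - k); rwa [Nat.add_sub_cancel' (by omega)] at this
  exact S.hC12 (by rw [h5, ← h6, S.hC13])

lemma W0_high {k : ℕ} (hk : 7 ≤ k) : S.W 0 k = ⊥ := by
  obtain ⟨l, rfl⟩ : ∃ l, k = (6 + l) + 1 := ⟨k - 7, by omega⟩
  refine le_bot_iff.mp ?_
  refine (S.W_le_C 0 (6+l)).trans ?_
  rw [← S.hC06]
  exact S.C_le 0 (by omega)

lemma W1_high {k : ℕ} (hk : 4 ≤ k) : S.W 1 k = ⊥ := by
  obtain ⟨l, rfl⟩ : ∃ l, k = (3 + l) + 1 := ⟨k - 4, by omega⟩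
  refine le_bot_iff.mp ?_
  refine (S.W_le_C 1 (3+l)).trans ?_
  rw [← S.hC13]
  exact S.C_le 1 (by omega)

lemma g0_decomp : S.A.g 0 =
    S.W 0 1 ⊔ (S.W 0 2 ⊔ (S.W 0 3 ⊔ (S.W 0 4 ⊔ (S.W 0 5 ⊔ S.W 0 6)))) := by
  rw [← S.C_zero 0, S.hWC 0 0, S.hWC 0 1, S.hWC 0 2, S.hWC 0 3, S.hWC 0 4, S.hWC 0 5,
    S.hC06, sup_bot_eq]

lemma C01_decomp : S.A.C 0 1 = S.W 0 2 ⊔ (S.W 0 3 ⊔ (S.W 0 4 ⊔ (S.W 0 5 ⊔ S.W 0 6))) := by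
  rw [S.hWC 0 1, S.hWC 0 2, S.hWC 0 3, S.hWC 0 4, S.hWC 0 5, S.hC06, sup_bot_eq]

lemma g1_decomp : S.A.g 1 = S.W 1 1 ⊔ (S.W 1 2 ⊔ S.W 1 3) := by
  rw [← S.C_zero 1, S.hWC 1 0, S.hWC 1 1, S.hWC 1 2, S.hC13, sup_bot_eq]

lemma ssign00 : ssign 0 0 = 1 := by simp [ssign]
lemma ssign01 : ssign 0 1 = 1 := by simp [ssign]
lemma ssign10 : ssign 1 0 = 1 := by simp [ssign]
lemma ssign11 : ssign 1 1 = -1 := by simp [ssign]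

lemma bk_skew00 {x y : V} (hx : x ∈ S.A.g 0) (hy : y ∈ S.A.g 0) :
    S.A.bk x y = - S.A.bk y x := by
  have := S.A.skew 0 0 x hx y hy; rwa [ssign00, one_smul] at this

lemma bk_self {x : V} (hx : x ∈ S.A.g 0) : S.A.bk x x = 0 := by
  have := S.bk_skew00 hx hx
  have h2 : (2 : ℂ) • S.A.bk x x = 0 := by
    rw [two_smul]; exact add_eq_zero_iff_eq_neg.mpr this
  simpa using (smul_eq_zero.mp h2).resolve_left (by norm_num)

lemma bk_skew01 {x y : V} (hx : x ∈ S.A.g 0) (hy : y ∈ S.A.g 1) :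
    S.A.bk y x = - S.A.bk x y := by
  have := S.A.skew 1 0 y hy x hx; rwa [ssign10, one_smul] at this

lemma bk_symm11 {x y : V} (hx : x ∈ S.A.g 1) (hy : y ∈ S.A.g 1) :
    S.A.bk x y = S.A.bk y x := by
  have := S.A.skew 1 1 x hx y hy; rw [ssign11] at this
  simpa using this

lemma jac000 {x y z : V} (hx : x ∈ S.A.g 0) (hy : y ∈ S.A.g 0) (hz : z ∈ S.A.g 0) :
    S.A.bk x (S.A.bk y z) + S.A.bk y (S.A.bk z x) + S.A.bk z (S.A.bk x y) = 0 := by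
  have := S.A.jacobi 0 0 0 x hx y hy z hz
  rwa [ssign00, one_smul, one_smul, one_smul] at this

lemma jac001 {x y z : V} (hx : x ∈ S.A.g 0) (hy : y ∈ S.A.g 0) (hz : z ∈ S.A.g 1) :
    S.A.bk x (S.A.bk y z) + S.A.bk y (S.A.bk z x) + S.A.bk z (S.A.bk x y) = 0 := by
  have := S.A.jacobi 0 0 1 x hx y hy z hz
  rwa [ssign00, ssign01, ssign10, one_smul, one_smul, one_smul] at this

lemma jac011 {x y z : V} (hx : x ∈ S.A.g 0) (hy : y ∈ S.A.g 1) (hz : z ∈ S.A.g 1) :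
    S.A.bk x (S.A.bk y z) + S.A.bk y (S.A.bk z x) - S.A.bk z (S.A.bk x y) = 0 := by
  have := S.A.jacobi 0 1 1 x hx y hy z hz
  rw [ssign01, ssign10, ssign11, one_smul, one_smul, neg_one_smul] at this
  rwa [← sub_eq_add_neg] at this

/-- The key lemma: each graded piece is generated by brackets of `W 0 1` with the
previous piece. -/
lemma W_succ_eq (a : ZMod 2) (k : ℕ) :
    S.W a (k+2) = Submodule.span ℂ {z | ∃ x ∈ S.W 0 1, ∃ y ∈ S.W a (k+1), z = S.A.bk x y} := by
  set T := Submodule.span ℂ {z | ∃ x ∈ S.W 0 1, ∃ y ∈ S.W a (k+1), z = S.A.bk x y} with hT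
  have hTW : T ≤ S.W a (k+2) := by
    rw [hT, Submodule.span_le]
    rintro _ ⟨x, hx, y, hy, rfl⟩
    have := S.hWb 0 a 1 (k+1) x hx y hy
    rwa [zero_add, show 1 + (k+1) = k+2 by omega] at this
  -- brackets of C 0 1 with W a (k+1) land in C a (k+2)
  have hsub : ∀ y ∈ S.W a (k+1), ∀ x ∈ S.A.C 0 1, S.A.bk x y ∈ S.A.C a (k+2) := by
    intro y hy x hx
    have hcom : S.A.C 0 1 ≤ (S.A.C a (k+2)).comap (S.A.bk.flip y) := by
      rw [S.C01_decomp]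
      have key : ∀ i : ℕ, 2 ≤ i → S.W 0 i ≤ (S.A.C a (k+2)).comap (S.A.bk.flip y) := by
        intro i hi x' hx'
        simp only [Submodule.mem_comap, LinearMap.flip_apply]
        have hb := S.hWb 0 a i (k+1) x' hx' y hy
        rw [zero_add] at hb
        have : S.W a (i + (k+1)) ≤ S.A.C a (k+2) := by
          have h1 : S.W a (i + (k+1)) ≤ S.A.C a (i + k) := by
            have := S.W_le_C a (i + k)
            rwa [show i + k + 1 = i + (k+1) by omega] at this
          exact h1.trans (S.C_le a (by omega))
        exact this hb
      refine sup_le (key 2 (by omega)) (sup_le (key 3 (by omega)) (sup_le (key 4 (by omega))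
        (sup_le (key 5 (by omega)) (key 6 (by omega)))))
    exact hcom hx
  have hmain : S.A.C a (k+1) ≤ T ⊔ S.A.C a (k+2) := by
    rw [S.C_succ a k, Submodule.span_le]
    rintro _ ⟨x, hx, y, hy, rfl⟩
    have hx' : x ∈ S.W 0 1 ⊔ S.A.C 0 1 := by rw [← S.hWC 0 0]; exact hx
    have hy' : y ∈ S.W a (k+1) ⊔ S.A.C a (k+1) := by rw [← S.hWC a k]; exact hy
    obtain ⟨x1, hx1, x2, hx2, rfl⟩ := Submodule.mem_sup.mp hx'
    obtain ⟨y1, hy1, y2, hy2, rfl⟩ := Submodule.mem_sup.mp hy'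
    have hexp : S.A.bk (x1 + x2) (y1 + y2) =
        S.A.bk x1 y1 + (S.A.bk x1 y2 + (S.A.bk x2 y1 + S.A.bk x2 y2)) := by
      simp [map_add]; abel
    rw [SetLike.mem_coe, hexp]
    have m11 : S.A.bk x1 y1 ∈ T := Submodule.subset_span ⟨x1, hx1, y1, hy1, rfl⟩
    have hCgen : ∀ u ∈ S.A.g 0, ∀ v ∈ S.A.C a (k+1), S.A.bk u v ∈ S.A.C a (k+2) := by
      intro u hu v hv
      rw [S.C_succ a (k+1)]
      exact Submodule.subset_span ⟨u, hu, v, hv, rfl⟩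
    have m12 : S.A.bk x1 y2 ∈ S.A.C a (k+2) :=
      hCgen x1 (S.W_le_g 0 (by omega) hx1) y2 hy2
    have m22 : S.A.bk x2 y2 ∈ S.A.C a (k+2) := by
      refine hCgen x2 ?_ y2 hy2
      rw [← S.C_zero 0]; exact S.C_le 0 (by omega) hx2
    have m21 : S.A.bk x2 y1 ∈ S.A.C a (k+2) := hsub y1 hy1 x2 hx2
    exact add_mem (le_sup_left (α := Submodule ℂ V) m11)
      (add_mem (le_sup_right (α := Submodule ℂ V) m12)
        (add_mem (le_sup_right (α := Submodule ℂ V) m21)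
          (le_sup_right (α := Submodule ℂ V) m22)))
  refine le_antisymm ?_ hTW
  intro w hw
  have hw' : w ∈ S.A.C a (k+1) := S.W_le_C a (k+1) hw
  obtain ⟨s, hs, c, hc, hsc⟩ := Submodule.mem_sup.mp (hmain hw')
  have hcW : c ∈ S.W a (k+2) := by
    have : c = w - s := by rw [← hsc]; abel
    rw [this]
    exact sub_mem hw (hTW hs)
  have : c ∈ S.W a (k+2) ⊓ S.A.C a (k+2) := ⟨hcW, hc⟩
  rw [S.hWd a (k+1)] at this
  have hc0 : c = 0 := by simpa using this
  rw [← hsc, hc0, add_zero]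
  exact hs

section FD

variable [FiniteDimensional ℂ V]

lemma finrank_C (a : ZMod 2) (k : ℕ) :
    finrank ℂ (S.A.C a k) = finrank ℂ (S.W a (k+1)) + finrank ℂ (S.A.C a (k+1)) := by
  have h := Submodule.finrank_sup_add_finrank_inf_eq (S.W a (k+1)) (S.A.C a (k+1))
  rw [S.hWd a k, ← S.hWC a k, finrank_bot, add_zero] at h
  exact h

lemma finrank_pos_of_ne_bot {p : Submodule ℂ V} (hp : p ≠ ⊥) : 1 ≤ finrank ℂ p := by
  rcases Nat.eq_zero_or_pos (finrank ℂ p) with h | h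
  · exact absurd (Submodule.finrank_eq_zero.mp h) hp
  · exact h

lemma sum_d0 : finrank ℂ (S.W 0 1) + finrank ℂ (S.W 0 2) + finrank ℂ (S.W 0 3)
    + finrank ℂ (S.W 0 4) + finrank ℂ (S.W 0 5) + finrank ℂ (S.W 0 6) = 7 := by
  have h0 := S.finrank_C 0 0
  have h1 := S.finrank_C 0 1
  have h2 := S.finrank_C 0 2
  have h3 := S.finrank_C 0 3
  have h4 := S.finrank_C 0 4
  have h5 := S.finrank_C 0 5
  have e0 : finrank ℂ (S.A.C 0 0) = 7 := by rw [S.C_zero]; exact S.hg0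
  have e6 : finrank ℂ (S.A.C 0 6) = 0 := by rw [S.hC06]; exact finrank_bot ℂ V
  simp only [Nat.reduceAdd] at *
  omega

lemma sum_d1 : finrank ℂ (S.W 1 1) + finrank ℂ (S.W 1 2) + finrank ℂ (S.W 1 3) = 3 := by
  have h0 := S.finrank_C 1 0
  have h1 := S.finrank_C 1 1
  have h2 := S.finrank_C 1 2
  have e0 : finrank ℂ (S.A.C 1 0) = 3 := by rw [S.C_zero]; exact S.hg1
  have e3 : finrank ℂ (S.A.C 1 3) = 0 := by rw [S.hC13]; exact finrank_bot ℂ V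
  simp only [Nat.reduceAdd] at *
  omega

lemma d1_eq (k : ℕ) (hk : 1 ≤ k) (hk3 : k ≤ 3) : finrank ℂ (S.W 1 k) = 1 := by
  have h1 := finrank_pos_of_ne_bot (S.W1_ne_bot (k := 0) (by omega))
  have h2 := finrank_pos_of_ne_bot (S.W1_ne_bot (k := 1) (by omega))
  have h3 := finrank_pos_of_ne_bot (S.W1_ne_bot (k := 2) (by omega))
  have h4 := S.sum_d1
  simp only [Nat.reduceAdd] at *
  interval_cases k <;> omega

lemma span_eq_one_dim {p : Submodule ℂ V} (hp : finrank ℂ p = 1) {x : V}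
    (hx : x ∈ p) (h0 : x ≠ 0) : p = Submodule.span ℂ {x} := by
  refine (eq_of_le_of_finrank_le ?_ ?_).symm
  · exact (Submodule.span_singleton_le_iff_mem x p).mpr hx
  · rw [finrank_span_singleton h0, hp]

lemma exists_smul_one_dim {p : Submodule ℂ V} (hp : finrank ℂ p = 1) {x y : V}
    (hx : x ∈ p) (h0 : x ≠ 0) (hy : y ∈ p) : ∃ c : ℂ, y = c • x := by
  rw [span_eq_one_dim hp hx h0] at hy
  obtain ⟨c, hc⟩ := Submodule.mem_span_singleton.mp hy
  exact ⟨c, hc.symm⟩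

lemma mem_span_pair' {u v x : V} (h : x ∈ Submodule.span ℂ ({u, v} : Set V)) :
    ∃ a b : ℂ, x = a • u + b • v := by
  rw [Submodule.mem_span_insert] at h
  obtain ⟨a, z, hz, rfl⟩ := h
  obtain ⟨b, hb⟩ := Submodule.mem_span_singleton.mp hz
  exact ⟨a, b, by rw [← hb]⟩

lemma mem_span_triple' {u v w x : V} (h : x ∈ Submodule.span ℂ ({u, v, w} : Set V)) :
    ∃ a b c : ℂ, x = a • u + b • v + c • w := by
  rw [Submodule.mem_span_insert] at h
  obtain ⟨a, z, hz, rfl⟩ := h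
  obtain ⟨b, c, rfl⟩ := mem_span_pair' hz
  exact ⟨a, b, c, by abel⟩

lemma d0_1 : finrank ℂ (S.W 0 1) = 2 := by
  have h1 := finrank_pos_of_ne_bot (S.W0_ne_bot (k := 0) (by omega))
  have h2 := finrank_pos_of_ne_bot (S.W0_ne_bot (k := 1) (by omega))
  have h3 := finrank_pos_of_ne_bot (S.W0_ne_bot (k := 2) (by omega))
  have h4 := finrank_pos_of_ne_bot (S.W0_ne_bot (k := 3) (by omega))
  have h5 := finrank_pos_of_ne_bot (S.W0_ne_bot (k := 4) (by omega))
  have h6 := finrank_pos_of_ne_bot (S.W0_ne_bot (k := 5) (by omega))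
  have hsum := S.sum_d0
  have hne : finrank ℂ (S.W 0 1) ≠ 1 := by
    intro h
    obtain ⟨u, hu, hu0⟩ := Submodule.exists_mem_ne_zero_of_ne_bot (S.W0_ne_bot (k := 0) (by omega))
    have hspan : S.W 0 1 = Submodule.span ℂ {u} := span_eq_one_dim h hu hu0
    have hbot : S.W 0 2 = ⊥ := by
      have h02 := S.W_succ_eq 0 0
      norm_num at h02
      rw [h02]
      refine le_bot_iff.mp (Submodule.span_le.2 ?_)
      rintro _ ⟨x, hx, y, hy, rfl⟩
      rw [hspan] at hx hy
      obtain ⟨c, hc⟩ := Submodule.mem_span_singleton.mp hx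
      obtain ⟨d, hd⟩ := Submodule.mem_span_singleton.mp hy
      have huu : S.A.bk u u = 0 := S.bk_self (S.W_le_g 0 (by omega) hu)
      simp only [SetLike.mem_coe, Submodule.mem_bot]
      rw [← hc, ← hd]
      simp [huu]
    exact S.W0_ne_bot (k := 1) (by omega) hbot
  simp only [Nat.reduceAdd] at *
  omega

lemma d0_eq (k : ℕ) (hk : 2 ≤ k) (hk6 : k ≤ 6) : finrank ℂ (S.W 0 k) = 1 := by
  have h2 := finrank_pos_of_ne_bot (S.W0_ne_bot (k := 1) (by omega))
  have h3 := finrank_pos_of_ne_bot (S.W0_ne_bot (k := 2) (by omega))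
  have h4 := finrank_pos_of_ne_bot (S.W0_ne_bot (k := 3) (by omega))
  have h5 := finrank_pos_of_ne_bot (S.W0_ne_bot (k := 4) (by omega))
  have h6 := finrank_pos_of_ne_bot (S.W0_ne_bot (k := 5) (by omega))
  have hsum := S.sum_d0
  have hd1 := S.d0_1
  simp only [Nat.reduceAdd] at *
  interval_cases k <;> omega

lemma span_pair_W01 {u v : V} (hu : u ∈ S.W 0 1) (hv : v ∈ S.W 0 1)
    (hbk : S.A.bk u v ≠ 0) : S.W 0 1 = Submodule.span ℂ {u, v} := by
  have hu0 : u ≠ 0 := by rintro rfl; simp at hbk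
  have hv0 : v ≠ 0 := by rintro rfl; simp at hbk
  have hvv : S.A.bk v v = 0 := S.bk_self (S.W_le_g 0 (by omega) hv)
  have hinf : Submodule.span ℂ {u} ⊓ Submodule.span ℂ {v} = ⊥ := by
    rw [eq_bot_iff]
    rintro x ⟨hx1, hx2⟩
    obtain ⟨a, ha⟩ := Submodule.mem_span_singleton.mp hx1
    obtain ⟨b, hb⟩ := Submodule.mem_span_singleton.mp hx2
    simp only [Submodule.mem_bot]
    by_contra hx0
    have ha0 : a ≠ 0 := by rintro rfl; simp at ha; exact hx0 ha.symm
    have : u = (a⁻¹ * b) • v := by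
      rw [mul_smul, hb, ← ha, ← mul_smul, inv_mul_cancel₀ ha0, one_smul]
    rw [this] at hbk
    simp [hvv] at hbk
  have hrank : finrank ℂ (Submodule.span ℂ ({u, v} : Set V)) = 2 := by
    rw [Submodule.span_insert]
    have := Submodule.finrank_sup_add_finrank_inf_eq (Submodule.span ℂ {u}) (Submodule.span ℂ {v})
    rw [hinf, finrank_bot, add_zero, finrank_span_singleton hu0, finrank_span_singleton hv0] at this
    omega
  refine (eq_of_le_of_finrank_le ?_ ?_).symm
  · exact Submodule.span_le.2 (by rintro x (rfl | rfl) <;> assumption)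
  · rw [hrank, S.d0_1]

lemma smul_cancel {x : V} (hx : x ≠ 0) {p q : ℂ} (h : p • x = q • x) : p = q := by
  have h2 : (p - q) • x = 0 := by rw [sub_smul, h, sub_self]
  rcases smul_eq_zero.mp h2 with h3 | h3
  · exact sub_eq_zero.mp h3
  · exact absurd h3 hx

set_option maxHeartbeats 2000000 in
theorem main (S : GSetup V) (hnd : S.A.NonDegenerate) :
    ∃ X Y : ℕ → V, S.A.IsAdaptedBasis 6 3 X Y ∧
    (∀ i j : ℕ, i ≤ 6 → j ≤ 6 → S.A.bk (X i) (X j) =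
      if i = 0 ∧ 1 ≤ j ∧ j ≤ 5 then X (j + 1)
      else if j = 0 ∧ 1 ≤ i ∧ i ≤ 5 then -X (i + 1) else 0) ∧
    (∀ i j : ℕ, i ≤ 6 → 1 ≤ j → j ≤ 3 → S.A.bk (X i) (Y j) =
      if i = 0 ∧ j ≤ 2 then Y (j + 1) else 0) ∧
    (∀ i j : ℕ, 1 ≤ i → i ≤ 3 → 1 ≤ j → j ≤ 3 → S.A.bk (Y i) (Y j) =
      if i = 1 ∧ j = 1 then (6 : ℂ) • X 2
      else if (i = 1 ∧ j = 2) ∨ (i = 2 ∧ j = 1) then (3 : ℂ) • X 3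
      else if (i = 1 ∧ j = 3) ∨ (i = 3 ∧ j = 1) then X 4
      else if i = 2 ∧ j = 2 then (2 : ℂ) • X 4
      else if (i = 2 ∧ j = 3) ∨ (i = 3 ∧ j = 2) then X 5
      else if i = 3 ∧ j = 3 then X 6 else 0) := by
  -- dimension facts, normalized indices
  have d01 := S.d0_1
  have d02 : finrank ℂ (S.W 0 2) = 1 := S.d0_eq 2 (by omega) (by omega)
  have d03 : finrank ℂ (S.W 0 3) = 1 := S.d0_eq 3 (by omega) (by omega)
  have d04 : finrank ℂ (S.W 0 4) = 1 := S.d0_eq 4 (by omega) (by omega)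
  have d05 : finrank ℂ (S.W 0 5) = 1 := S.d0_eq 5 (by omega) (by omega)
  have d06 : finrank ℂ (S.W 0 6) = 1 := S.d0_eq 6 (by omega) (by omega)
  have d11 : finrank ℂ (S.W 1 1) = 1 := S.d1_eq 1 (by omega) (by omega)
  have d12 : finrank ℂ (S.W 1 2) = 1 := S.d1_eq 2 (by omega) (by omega)
  have d13 : finrank ℂ (S.W 1 3) = 1 := S.d1_eq 3 (by omega) (by omega)
  have ne02 : S.W 0 2 ≠ ⊥ := by have := S.W0_ne_bot (k := 1) (by omega); norm_num at this; exact this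
  have ne03 : S.W 0 3 ≠ ⊥ := by have := S.W0_ne_bot (k := 2) (by omega); norm_num at this; exact this
  have ne04 : S.W 0 4 ≠ ⊥ := by have := S.W0_ne_bot (k := 3) (by omega); norm_num at this; exact this
  have ne05 : S.W 0 5 ≠ ⊥ := by have := S.W0_ne_bot (k := 4) (by omega); norm_num at this; exact this
  have ne06 : S.W 0 6 ≠ ⊥ := by have := S.W0_ne_bot (k := 5) (by omega); norm_num at this; exact this
  have ne11 : S.W 1 1 ≠ ⊥ := by have := S.W1_ne_bot (k := 0) (by omega); norm_num at this; exact this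
  have ne12 : S.W 1 2 ≠ ⊥ := by have := S.W1_ne_bot (k := 1) (by omega); norm_num at this; exact this
  have ne13 : S.W 1 3 ≠ ⊥ := by have := S.W1_ne_bot (k := 2) (by omega); norm_num at this; exact this
  -- generation lemmas with normalized indices
  have gen : ∀ (a : ZMod 2) (k : ℕ), S.W a (k+2) =
      Submodule.span ℂ {z | ∃ x ∈ S.W 0 1, ∃ y ∈ S.W a (k+1), z = S.A.bk x y} := S.W_succ_eq
  -- choose u, v with nonzero bracket
  obtain ⟨u, hu, v, hv, huv0⟩ : ∃ u ∈ S.W 0 1, ∃ v ∈ S.W 0 1, S.A.bk u v ≠ 0 := by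
    by_contra h
    push_neg at h
    refine ne02 ?_
    have h02 := gen 0 0
    norm_num at h02
    rw [h02]
    refine le_bot_iff.mp (Submodule.span_le.2 ?_)
    rintro _ ⟨x, hx, y, hy, rfl⟩
    simp only [SetLike.mem_coe, Submodule.mem_bot]
    exact h x hx y hy
  have hspan01 : S.W 0 1 = Submodule.span ℂ {u, v} := S.span_pair_W01 hu hv huv0
  have hug : u ∈ S.A.g 0 := S.W_le_g 0 (by omega) hu
  have hvg : v ∈ S.A.g 0 := S.W_le_g 0 (by omega) hv
  -- fixed nonzero vectors in the one-dimensional pieces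
  set w2 : V := S.A.bk u v with hw2def
  have hw2 : w2 ∈ S.W 0 2 := by
    have := S.hWb 0 0 1 1 u hu v hv
    rwa [show ((0:ZMod 2)+0) = 0 by decide, show (1:ℕ)+1 = 2 from rfl] at this
  obtain ⟨w3, hw3, hw30⟩ := Submodule.exists_mem_ne_zero_of_ne_bot ne03
  obtain ⟨w4, hw4, hw40⟩ := Submodule.exists_mem_ne_zero_of_ne_bot ne04
  obtain ⟨w5, hw5, hw50⟩ := Submodule.exists_mem_ne_zero_of_ne_bot ne05
  obtain ⟨y1, hy1, hy10⟩ := Submodule.exists_mem_ne_zero_of_ne_bot ne11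
  obtain ⟨y2, hy2, hy20⟩ := Submodule.exists_mem_ne_zero_of_ne_bot ne12
  -- "not both brackets vanish" for spanning vectors of one-dimensional pieces
  have key : ∀ (a : ZMod 2) (k : ℕ), finrank ℂ (S.W a (k+1)) = 1 →
      ∀ w ∈ S.W a (k+1), w ≠ 0 → S.W a (k+2) ≠ ⊥ →
      ¬(S.A.bk u w = 0 ∧ S.A.bk v w = 0) := by
    rintro a k hfr w hw hw0 hne ⟨h1, h2⟩
    refine hne ?_
    rw [gen a k]
    refine le_bot_iff.mp (Submodule.span_le.2 ?_)
    rintro _ ⟨x, hx, y, hy, rfl⟩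
    simp only [SetLike.mem_coe, Submodule.mem_bot]
    rw [hspan01] at hx
    obtain ⟨p, q, rfl⟩ := mem_span_pair' hx
    obtain ⟨c, rfl⟩ := exists_smul_one_dim hfr hw hw0 hy
    simp [map_add, map_smul, h1, h2]
  have hbad : ∀ w : V, ¬(S.A.bk u w = 0 ∧ S.A.bk v w = 0) →
      {s : ℂ | S.A.bk (u + s • v) w = 0}.Subsingleton := by
    intro w hw s1 hs1 s2 hs2
    simp only [Set.mem_setOf_eq, map_add, map_smul, LinearMap.add_apply,
      LinearMap.smul_apply] at hs1 hs2
    have heq : s1 • S.A.bk v w = s2 • S.A.bk v w := by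
      have e1 : s1 • S.A.bk v w = -S.A.bk u w := by
        rw [eq_neg_iff_add_eq_zero, add_comm]; exact hs1
      have e2 : s2 • S.A.bk v w = -S.A.bk u w := by
        rw [eq_neg_iff_add_eq_zero, add_comm]; exact hs2
      rw [e1, e2]
    have hsub : (s1 - s2) • S.A.bk v w = 0 := by
      rw [sub_smul, heq, sub_self]
    rcases smul_eq_zero.mp hsub with h | h
    · exact sub_eq_zero.mp h
    · exfalso
      apply hw
      constructor
      · have : S.A.bk u w + s1 • S.A.bk v w = 0 := hs1
        rw [h, smul_zero, add_zero] at this; exact this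
      · exact h
  have k2 := key 0 1 (by norm_num [d02]) w2 hw2 huv0 (by norm_num [ne03])
  have k3 := key 0 2 (by norm_num [d03]) w3 hw3 hw30 (by norm_num [ne04])
  have k4 := key 0 3 (by norm_num [d04]) w4 hw4 hw40 (by norm_num [ne05])
  have k5 := key 0 4 (by norm_num [d05]) w5 hw5 hw50 (by norm_num [ne06])
  have k6 := key 1 0 (by norm_num [d11]) y1 hy1 hy10 (by norm_num [ne12])
  have k7 := key 1 1 (by norm_num [d12]) y2 hy2 hy20 (by norm_num [ne13])
  -- choose a good parameter t
  obtain ⟨t, ht⟩ : ∃ t : ℂ, S.A.bk (u + t • v) w2 ≠ 0 ∧ S.A.bk (u + t • v) w3 ≠ 0 ∧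
      S.A.bk (u + t • v) w4 ≠ 0 ∧ S.A.bk (u + t • v) w5 ≠ 0 ∧
      S.A.bk (u + t • v) y1 ≠ 0 ∧ S.A.bk (u + t • v) y2 ≠ 0 := by
    have hfin : ({s : ℂ | S.A.bk (u + s • v) w2 = 0} ∪ {s : ℂ | S.A.bk (u + s • v) w3 = 0} ∪
        {s : ℂ | S.A.bk (u + s • v) w4 = 0} ∪ {s : ℂ | S.A.bk (u + s • v) w5 = 0} ∪
        {s : ℂ | S.A.bk (u + s • v) y1 = 0} ∪ {s : ℂ | S.A.bk (u + s • v) y2 = 0}).Finite := by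
      refine (((((((hbad w2 k2).finite.union (hbad w3 k3).finite).union
        (hbad w4 k4).finite).union (hbad w5 k5).finite).union
        (hbad y1 k6).finite).union (hbad y2 k7).finite))
    obtain ⟨t, ht⟩ := hfin.infinite_compl.nonempty
    refine ⟨t, ?_⟩
    simp only [Set.mem_compl_iff, Set.mem_union, Set.mem_setOf_eq, not_or] at ht
    tauto
  obtain ⟨c2ne, c3ne, c4ne, c5ne, o1ne, o2ne⟩ := ht
  -- the basis vectors
  set X0 : V := u + t • v with hX0def
  have hX0 : X0 ∈ S.W 0 1 := add_mem hu (Submodule.smul_mem _ t hv)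
  have hX0g : X0 ∈ S.A.g 0 := S.W_le_g 0 (by omega) hX0
  have hvv : S.A.bk v v = 0 := S.bk_self hvg
  have hX0v : S.A.bk X0 v = w2 := by
    rw [hX0def, hw2def]
    simp [map_add, map_smul, hvv]
  set X3 : V := S.A.bk X0 w2 with hX3def
  set X4 : V := S.A.bk X0 X3 with hX4def
  set X5 : V := S.A.bk X0 X4 with hX5def
  set X6 : V := S.A.bk X0 X5 with hX6def
  set Y2 : V := S.A.bk X0 y1 with hY2def
  set Y3 : V := S.A.bk X0 Y2 with hY3def
  -- bracket membership helpers
  have mb : ∀ (a : ZMod 2) (k : ℕ), ∀ y ∈ S.W a k, S.A.bk X0 y ∈ S.W a (k+1) := by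
    intro a k y hy
    have := S.hWb 0 a 1 k X0 hX0 y hy
    rwa [zero_add, show 1 + k = k + 1 by omega] at this
  have mbk00 : ∀ (i j : ℕ), ∀ x ∈ S.W 0 i, ∀ y ∈ S.W 0 j, S.A.bk x y ∈ S.W 0 (i+j) := by
    intro i j x hx y hy
    have := S.hWb 0 0 i j x hx y hy
    rwa [show ((0:ZMod 2)+0) = 0 by decide] at this
  have mbk01 : ∀ (i j : ℕ), ∀ x ∈ S.W 0 i, ∀ y ∈ S.W 1 j, S.A.bk x y ∈ S.W 1 (i+j) := by
    intro i j x hx y hy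
    have := S.hWb 0 1 i j x hx y hy
    rwa [zero_add] at this
  have mbk10 : ∀ (i j : ℕ), ∀ x ∈ S.W 1 i, ∀ y ∈ S.W 0 j, S.A.bk x y ∈ S.W 1 (i+j) := by
    intro i j x hx y hy
    have := S.hWb 1 0 i j x hx y hy
    rwa [add_zero] at this
  have mbk11 : ∀ (i j : ℕ), ∀ x ∈ S.W 1 i, ∀ y ∈ S.W 1 j, S.A.bk x y ∈ S.W 0 (i+j) := by
    intro i j x hx y hy
    have := S.hWb 1 1 i j x hx y hy
    rwa [show ((1:ZMod 2)+1) = 0 by decide] at this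
  -- vanishing in high degrees
  have z00 : ∀ (i j : ℕ), 7 ≤ i + j → ∀ x ∈ S.W 0 i, ∀ y ∈ S.W 0 j, S.A.bk x y = 0 := by
    intro i j hij x hx y hy
    have := mbk00 i j x hx y hy
    rw [S.W0_high hij] at this
    simpa using this
  have z01 : ∀ (i j : ℕ), 4 ≤ i + j → ∀ x ∈ S.W 0 i, ∀ y ∈ S.W 1 j, S.A.bk x y = 0 := by
    intro i j hij x hx y hy
    have := mbk01 i j x hx y hy
    rw [S.W1_high hij] at this
    simpa using this
  have z10 : ∀ (i j : ℕ), 4 ≤ i + j → ∀ x ∈ S.W 1 i, ∀ y ∈ S.W 0 j, S.A.bk x y = 0 := by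
    intro i j hij x hx y hy
    have := mbk10 i j x hx y hy
    rw [S.W1_high hij] at this
    simpa using this
  -- memberships
  have hX3m : X3 ∈ S.W 0 3 := mb 0 2 w2 hw2
  have hX4m : X4 ∈ S.W 0 4 := mb 0 3 X3 hX3m
  have hX5m : X5 ∈ S.W 0 5 := mb 0 4 X4 hX4m
  have hX6m : X6 ∈ S.W 0 6 := mb 0 5 X5 hX5m
  have hY2m : Y2 ∈ S.W 1 2 := mb 1 1 y1 hy1
  have hY3m : Y3 ∈ S.W 1 3 := mb 1 2 Y2 hY2m
  have hw2g : w2 ∈ S.A.g 0 := S.W_le_g 0 (by omega) hw2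
  have hX3g : X3 ∈ S.A.g 0 := S.W_le_g 0 (by omega) hX3m
  have hX4g : X4 ∈ S.A.g 0 := S.W_le_g 0 (by omega) hX4m
  have hX5g : X5 ∈ S.A.g 0 := S.W_le_g 0 (by omega) hX5m
  have hX6g : X6 ∈ S.A.g 0 := S.W_le_g 0 (by omega) hX6m
  have hY1g : y1 ∈ S.A.g 1 := S.W_le_g 1 (by omega) hy1
  have hY2g : Y2 ∈ S.A.g 1 := S.W_le_g 1 (by omega) hY2m
  have hY3g : Y3 ∈ S.A.g 1 := S.W_le_g 1 (by omega) hY3m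
  -- nonvanishing
  have hw20 : w2 ≠ 0 := huv0
  have hX30 : X3 ≠ 0 := c2ne
  obtain ⟨c3, hc3⟩ : ∃ c : ℂ, X3 = c • w3 := exists_smul_one_dim d03 hw3 hw30 hX3m
  have hc30 : c3 ≠ 0 := by rintro rfl; rw [zero_smul] at hc3; exact hX30 hc3
  have hX40 : X4 ≠ 0 := by
    rw [hX4def, hc3, map_smul]
    exact smul_ne_zero hc30 c3ne
  obtain ⟨c4, hc4⟩ : ∃ c : ℂ, X4 = c • w4 := exists_smul_one_dim d04 hw4 hw40 hX4m
  have hc40 : c4 ≠ 0 := by rintro rfl; rw [zero_smul] at hc4; exact hX40 hc4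
  have hX50 : X5 ≠ 0 := by
    rw [hX5def, hc4, map_smul]
    exact smul_ne_zero hc40 c4ne
  obtain ⟨c5, hc5⟩ : ∃ c : ℂ, X5 = c • w5 := exists_smul_one_dim d05 hw5 hw50 hX5m
  have hc50 : c5 ≠ 0 := by rintro rfl; rw [zero_smul] at hc5; exact hX50 hc5
  have hX60 : X6 ≠ 0 := by
    rw [hX6def, hc5, map_smul]
    exact smul_ne_zero hc50 c5ne
  have hY20 : Y2 ≠ 0 := o1ne
  obtain ⟨e2, he2⟩ : ∃ c : ℂ, Y2 = c • y2 := exists_smul_one_dim d12 hy2 hy20 hY2m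
  have he20 : e2 ≠ 0 := by rintro rfl; rw [zero_smul] at he2; exact hY20 he2
  have hY30 : Y3 ≠ 0 := by
    rw [hY3def, he2, map_smul]
    exact smul_ne_zero he20 o2ne
  -- scalar extraction for brackets of basis vectors
  obtain ⟨t2, ht2⟩ : ∃ c : ℂ, S.A.bk v w2 = c • X3 :=
    exists_smul_one_dim d03 hX3m hX30 (mbk00 1 2 v hv w2 hw2)
  obtain ⟨t3, ht3⟩ : ∃ c : ℂ, S.A.bk v X3 = c • X4 :=
    exists_smul_one_dim d04 hX4m hX40 (mbk00 1 3 v hv X3 hX3m)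
  obtain ⟨t4, ht4⟩ : ∃ c : ℂ, S.A.bk v X4 = c • X5 :=
    exists_smul_one_dim d05 hX5m hX50 (mbk00 1 4 v hv X4 hX4m)
  obtain ⟨t5, ht5⟩ : ∃ c : ℂ, S.A.bk v X5 = c • X6 :=
    exists_smul_one_dim d06 hX6m hX60 (mbk00 1 5 v hv X5 hX5m)
  obtain ⟨fa, hfa⟩ : ∃ c : ℂ, S.A.bk y1 y1 = c • w2 :=
    exists_smul_one_dim d02 hw2 hw20 (mbk11 1 1 y1 hy1 y1 hy1)
  obtain ⟨fb, hfb⟩ : ∃ c : ℂ, S.A.bk y1 Y2 = c • X3 :=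
    exists_smul_one_dim d03 hX3m hX30 (mbk11 1 2 y1 hy1 Y2 hY2m)
  obtain ⟨fc, hfc⟩ : ∃ c : ℂ, S.A.bk Y2 Y2 = c • X4 :=
    exists_smul_one_dim d04 hX4m hX40 (mbk11 2 2 Y2 hY2m Y2 hY2m)
  obtain ⟨fd, hfd⟩ : ∃ c : ℂ, S.A.bk y1 Y3 = c • X4 :=
    exists_smul_one_dim d04 hX4m hX40 (mbk11 1 3 y1 hy1 Y3 hY3m)
  obtain ⟨fe, hfe⟩ : ∃ c : ℂ, S.A.bk Y2 Y3 = c • X5 :=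
    exists_smul_one_dim d05 hX5m hX50 (mbk11 2 3 Y2 hY2m Y3 hY3m)
  obtain ⟨ff, hff⟩ : ∃ c : ℂ, S.A.bk Y3 Y3 = c • X6 :=
    exists_smul_one_dim d06 hX6m hX60 (mbk11 3 3 Y3 hY3m Y3 hY3m)
  obtain ⟨s1, hs1⟩ : ∃ c : ℂ, S.A.bk v y1 = c • Y2 :=
    exists_smul_one_dim d12 hY2m hY20 (mbk01 1 1 v hv y1 hy1)
  obtain ⟨s2, hs2⟩ : ∃ c : ℂ, S.A.bk v Y2 = c • Y3 :=
    exists_smul_one_dim d13 hY3m hY30 (mbk01 1 2 v hv Y2 hY2m)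
  obtain ⟨rr, hrr⟩ : ∃ c : ℂ, S.A.bk w2 y1 = c • Y3 :=
    exists_smul_one_dim d13 hY3m hY30 (mbk01 2 1 w2 hw2 y1 hy1)
  -- vanishing brackets with X0 in high degree
  have zX06 : S.A.bk X0 X6 = 0 := z00 1 6 (by omega) X0 hX0 X6 hX6m
  have zv6 : S.A.bk v X6 = 0 := z00 1 6 (by omega) v hv X6 hX6m
  have zw25 : S.A.bk w2 X5 = 0 := z00 2 5 (by omega) w2 hw2 X5 hX5m
  have zX0Y3 : S.A.bk X0 Y3 = 0 := z01 1 3 (by omega) X0 hX0 Y3 hY3m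
  have zvY3 : S.A.bk v Y3 = 0 := z01 1 3 (by omega) v hv Y3 hY3m
  -- Jacobi relations, even part
  have R1 : t2 = t3 := by
    have h := S.jac000 hX0g hvg hw2g
    simp only [ht2, S.bk_skew00 hw2g hX0g, hX0v, S.bk_self hw2g, ← hX3def, map_neg,
      map_smul, ht3, ← hX4def, add_zero] at h
    exact smul_cancel hX40 (by linear_combination (norm := module) h)
  have h32 : S.A.bk X3 w2 = (t4 - t3) • X5 := by
    have h := S.jac000 hX0g hvg hX3g
    simp only [ht3, S.bk_skew00 hX3g hX0g, hX0v, ← hX4def, map_neg, map_smul, ht4,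
      ← hX5def] at h
    linear_combination (norm := module) h
  have h23 : S.A.bk w2 X3 = (t3 - t4) • X5 := by
    rw [S.bk_skew00 hw2g hX3g, h32]
    module
  have h42 : S.A.bk X4 w2 = (t5 - t4) • X6 := by
    have h := S.jac000 hX0g hvg hX4g
    simp only [ht4, S.bk_skew00 hX4g hX0g, hX0v, ← hX5def, map_neg, map_smul, ht5,
      ← hX6def] at h
    linear_combination (norm := module) h
  have h24 : S.A.bk w2 X4 = (t4 - t5) • X6 := by
    rw [S.bk_skew00 hw2g hX4g, h42]
    module
  have R4 : t3 - t4 = t4 - t5 := by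
    have h := S.jac000 hX0g hw2g hX3g
    simp only [h23, S.bk_skew00 hX3g hX0g, ← hX4def, ← hX3def, map_neg, map_smul, h24,
      S.bk_self hX3g, ← hX6def, add_zero] at h
    exact smul_cancel hX60 (by linear_combination (norm := module) h)
  have h43 : S.A.bk X4 X3 = 0 := by
    have h := S.jac000 hX0g hw2g hX4g
    simp only [h24, S.bk_skew00 hX4g hX0g, ← hX5def, ← hX3def, map_neg, map_smul,
      zX06, zw25, smul_zero, neg_zero, zero_add, add_zero] at h
    -- h : bk X4 X3 = 0 up to zero additions
    linear_combination (norm := module) h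
  have h34 : S.A.bk X3 X4 = 0 := by
    rw [S.bk_skew00 hX3g hX4g, h43, neg_zero]
  have R6 : (t3 - t4) * t5 = t3 * (t4 - t5) := by
    have h := S.jac000 hvg hw2g hX3g
    simp only [h23, S.bk_skew00 hX3g hvg, ht3, map_neg, map_smul, ht5, h24, ht2,
      S.bk_self hX3g, smul_zero, add_zero] at h
    exact smul_cancel hX60 (by linear_combination (norm := module) h)
  -- solve for the t's
  rw [← R1] at R4 R6
  have et4 : t4 = t2 := by
    have ht5e : t5 = 2*t4 - t2 := by linear_combination R4
    rw [ht5e] at R6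
    have hsq : (t2 - t4)^2 = 0 := by linear_combination (-1/2 : ℂ) * R6
    have := pow_eq_zero_iff (by norm_num : (2:ℕ) ≠ 0) |>.mp hsq
    linear_combination -this
  have et5 : t5 = t2 := by linear_combination R4 + 2*et4
  have et3 : t3 = t2 := by linear_combination -R1
  -- Jacobi relations, odd part
  have R7 : fa = 2 * fb := by
    have h := S.jac011 hX0g hY1g hY1g
    simp only [hfa, map_smul, ← hX3def, S.bk_skew01 hX0g hY1g, ← hY2def, map_neg, hfb] at h
    exact smul_cancel hX30 (by linear_combination (norm := module) h)
  have R8 : fb = fd + fc := by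
    have h := S.jac011 hX0g hY1g hY2g
    simp only [hfb, map_smul, ← hX4def, S.bk_skew01 hX0g hY2g, ← hY3def, map_neg, hfd,
      ← hY2def, hfc] at h
    exact smul_cancel hX40 (by linear_combination (norm := module) h)
  have R9 : fd = fe := by
    have h := S.jac011 hX0g hY1g hY3g
    simp only [hfd, map_smul, ← hX5def, S.bk_skew01 hX0g hY3g, zX0Y3, neg_zero, map_zero,
      ← hY2def, S.bk_symm11 hY3g hY2g, hfe, add_zero] at h
    exact smul_cancel hX50 (by linear_combination (norm := module) h)
  have R10 : fc = 2 * fe := by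
    have h := S.jac011 hX0g hY2g hY2g
    simp only [hfc, map_smul, ← hX5def, S.bk_skew01 hX0g hY2g, ← hY3def, map_neg,
      hfe] at h
    exact smul_cancel hX50 (by linear_combination (norm := module) h)
  have R11 : fe = ff := by
    have h := S.jac011 hX0g hY2g hY3g
    simp only [hfe, map_smul, ← hX6def, S.bk_skew01 hX0g hY3g, zX0Y3, neg_zero, map_zero,
      ← hY3def, hff, add_zero] at h
    exact smul_cancel hX60 (by linear_combination (norm := module) h)
  have R12 : s1 - s2 - rr = 0 := by
    have h := S.jac001 hX0g hvg hY1g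
    simp only [hs1, map_smul, ← hY3def, S.bk_skew01 hX0g hY1g, ← hY2def, map_neg, hs2,
      hX0v, S.bk_skew01 hw2g hY1g, hrr] at h
    have := smul_cancel (p := s1 + -s2 + -rr) (q := 0) hY30
      (by linear_combination (norm := module) h)
    linear_combination this
  have R13 : fa * t2 = 2 * (s1 * fb) := by
    have h := S.jac011 hvg hY1g hY1g
    simp only [hfa, map_smul, ht2, S.bk_skew01 hvg hY1g, hs1, map_neg, hfb, smul_smul] at h
    exact smul_cancel hX30 (by linear_combination (norm := module) h)
  have R14 : fb * t3 = s2 * fd + s1 * fc := by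
    have h := S.jac011 hvg hY1g hY2g
    simp only [hfb, map_smul, ht3, S.bk_skew01 hvg hY2g, hs1, hs2, map_neg, hfd, hfc,
      smul_smul] at h
    exact smul_cancel hX40 (by linear_combination (norm := module) h)
  -- nondegeneracy forces ff ≠ 0
  have hff0 : ff ≠ 0 := by
    intro h0
    have efe : fe = 0 := by rw [R11, h0]
    have efd : fd = 0 := by rw [R9, efe]
    have efc : fc = 0 := by rw [R10, efe, mul_zero]
    have efb : fb = 0 := by rw [R8, efd, efc, add_zero]
    have efa : fa = 0 := by rw [R7, efb, mul_zero]
    have hg1span : S.A.g 1 = Submodule.span ℂ {y1, Y2, Y3} := by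
      rw [S.g1_decomp, span_eq_one_dim d11 hy1 hy10, span_eq_one_dim d12 hY2m hY20,
        span_eq_one_dim d13 hY3m hY30]
      rw [show ({y1, Y2, Y3} : Set V) = insert y1 {Y2, Y3} from rfl,
        Submodule.span_insert, Submodule.span_insert]
    have b11 : S.A.bk y1 y1 = 0 := by rw [hfa, efa, zero_smul]
    have b12 : S.A.bk y1 Y2 = 0 := by rw [hfb, efb, zero_smul]
    have b13 : S.A.bk y1 Y3 = 0 := by rw [hfd, efd, zero_smul]
    have b22 : S.A.bk Y2 Y2 = 0 := by rw [hfc, efc, zero_smul]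
    have b23 : S.A.bk Y2 Y3 = 0 := by rw [hfe, efe, zero_smul]
    have b33 : S.A.bk Y3 Y3 = 0 := by rw [hff, h0, zero_smul]
    have b21 : S.A.bk Y2 y1 = 0 := by rw [← S.bk_symm11 hY1g hY2g, b12]
    have b31 : S.A.bk Y3 y1 = 0 := by rw [← S.bk_symm11 hY1g hY3g, b13]
    have b32 : S.A.bk Y3 Y2 = 0 := by rw [← S.bk_symm11 hY2g hY3g, b23]
    obtain ⟨x, hx, y, hy, hxy⟩ := hnd
    rw [hg1span] at hx hy
    obtain ⟨p1, p2, p3, rfl⟩ := mem_span_triple' hx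
    obtain ⟨q1, q2, q3, rfl⟩ := mem_span_triple' hy
    refine hxy ?_
    simp [map_add, map_smul, b11, b12, b13, b21, b22, b23, b31, b32, b33]
  -- final values of the structure constants
  have vfe : fe = ff := R11
  have vfd : fd = ff := by rw [R9, R11]
  have vfc : fc = 2 * ff := by rw [R10, R11]
  have vfb : fb = 3 * ff := by rw [R8, vfd, vfc]; ring
  have vfa : fa = 6 * ff := by rw [R7, vfb]; ring
  have es1 : s1 = t2 := by
    have h : (6 * ff) * (t2 - s1) = 0 := by
      linear_combination R13 - t2 * vfa + 2 * s1 * vfb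
    rcases mul_eq_zero.mp h with h | h
    · exact (hff0 (by linear_combination h / 6)).elim
    · linear_combination -h
  have es2 : s2 = t2 := by
    have h : ff * (t2 - s2) = 0 := by
      linear_combination R14 - t3 * vfb - 3*ff*et3 + s2 * vfd + s1 * vfc + 2*ff*es1
    rcases mul_eq_zero.mp h with h | h
    · exact (hff0 h).elim
    · linear_combination -h
  have err : rr = 0 := by linear_combination -R12 + es1 - es2
  -- final basis ingredients
  set V1 : V := v - t2 • X0 with hV1def
  have hV1m : V1 ∈ S.W 0 1 := sub_mem hv (Submodule.smul_mem _ _ hX0)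
  have hV1g : V1 ∈ S.A.g 0 := S.W_le_g 0 (by omega) hV1m
  have flip0 : ∀ x y : V, x ∈ S.A.g 0 → y ∈ S.A.g 0 → S.A.bk x y = 0 → S.A.bk y x = 0 := by
    intro x y hx hy h
    rw [S.bk_skew00 hy hx, h, neg_zero]
  have hX0X0 : S.A.bk X0 X0 = 0 := S.bk_self hX0g
  have bX0V1 : S.A.bk X0 V1 = w2 := by
    rw [hV1def, map_sub, map_smul, hX0v, hX0X0, smul_zero, sub_zero]
  have bX0w2 : S.A.bk X0 w2 = X3 := hX3def.symm
  have bX0X3 : S.A.bk X0 X3 = X4 := hX4def.symm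
  have bX0X4 : S.A.bk X0 X4 = X5 := hX5def.symm
  have bX0X5 : S.A.bk X0 X5 = X6 := hX6def.symm
  have bX0y1 : S.A.bk X0 y1 = Y2 := hY2def.symm
  have bX0Y2 : S.A.bk X0 Y2 = Y3 := hY3def.symm
  have bV1V1 : S.A.bk V1 V1 = 0 := S.bk_self hV1g
  have bV1w2 : S.A.bk V1 w2 = 0 := by
    rw [hV1def, map_sub, LinearMap.sub_apply, map_smul, LinearMap.smul_apply, ht2, bX0w2,
      sub_self]
  have bV1X3 : S.A.bk V1 X3 = 0 := by
    rw [hV1def, map_sub, LinearMap.sub_apply, map_smul, LinearMap.smul_apply, ht3, bX0X3,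
      et3, sub_self]
  have bV1X4 : S.A.bk V1 X4 = 0 := by
    rw [hV1def, map_sub, LinearMap.sub_apply, map_smul, LinearMap.smul_apply, ht4, bX0X4,
      et4, sub_self]
  have bV1X5 : S.A.bk V1 X5 = 0 := by
    rw [hV1def, map_sub, LinearMap.sub_apply, map_smul, LinearMap.smul_apply, ht5, bX0X5,
      et5, sub_self]
  have bV1X6 : S.A.bk V1 X6 = 0 := by
    rw [hV1def, map_sub, LinearMap.sub_apply, map_smul, LinearMap.smul_apply, zv6, zX06,
      smul_zero, sub_self]
  have bV1y1 : S.A.bk V1 y1 = 0 := by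
    rw [hV1def, map_sub, LinearMap.sub_apply, map_smul, LinearMap.smul_apply, hs1, bX0y1,
      es1, sub_self]
  have bV1Y2 : S.A.bk V1 Y2 = 0 := by
    rw [hV1def, map_sub, LinearMap.sub_apply, map_smul, LinearMap.smul_apply, hs2, bX0Y2,
      es2, sub_self]
  have bV1Y3 : S.A.bk V1 Y3 = 0 := by
    rw [hV1def, map_sub, LinearMap.sub_apply, map_smul, LinearMap.smul_apply, zvY3, zX0Y3,
      smul_zero, sub_self]
  have bw2w2 : S.A.bk w2 w2 = 0 := S.bk_self hw2g
  have bw2X3 : S.A.bk w2 X3 = 0 := by rw [h23, et3, et4, sub_self, zero_smul]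
  have bw2X4 : S.A.bk w2 X4 = 0 := by rw [h24, et4, et5, sub_self, zero_smul]
  have bw2y1 : S.A.bk w2 y1 = 0 := by rw [hrr, err, zero_smul]
  have bX3X3 : S.A.bk X3 X3 = 0 := S.bk_self hX3g
  have bX4X4 : S.A.bk X4 X4 = 0 := S.bk_self hX4g
  have bX5X5 : S.A.bk X5 X5 = 0 := S.bk_self hX5g
  have bX6X6 : S.A.bk X6 X6 = 0 := S.bk_self hX6g
  have bw2X5 : S.A.bk w2 X5 = 0 := zw25
  have bw2X6 : S.A.bk w2 X6 = 0 := z00 2 6 (by omega) w2 hw2 X6 hX6m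
  have bX3X5 : S.A.bk X3 X5 = 0 := z00 3 5 (by omega) X3 hX3m X5 hX5m
  have bX3X6 : S.A.bk X3 X6 = 0 := z00 3 6 (by omega) X3 hX3m X6 hX6m
  have bX4X5 : S.A.bk X4 X5 = 0 := z00 4 5 (by omega) X4 hX4m X5 hX5m
  have bX4X6 : S.A.bk X4 X6 = 0 := z00 4 6 (by omega) X4 hX4m X6 hX6m
  have bX5X6 : S.A.bk X5 X6 = 0 := z00 5 6 (by omega) X5 hX5m X6 hX6m
  have bw2Y2 : S.A.bk w2 Y2 = 0 := z01 2 2 (by omega) w2 hw2 Y2 hY2m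
  have bw2Y3 : S.A.bk w2 Y3 = 0 := z01 2 3 (by omega) w2 hw2 Y3 hY3m
  have bX3y1 : S.A.bk X3 y1 = 0 := z01 3 1 (by omega) X3 hX3m y1 hy1
  have bX3Y2 : S.A.bk X3 Y2 = 0 := z01 3 2 (by omega) X3 hX3m Y2 hY2m
  have bX3Y3 : S.A.bk X3 Y3 = 0 := z01 3 3 (by omega) X3 hX3m Y3 hY3m
  have bX4y1 : S.A.bk X4 y1 = 0 := z01 4 1 (by omega) X4 hX4m y1 hy1
  have bX4Y2 : S.A.bk X4 Y2 = 0 := z01 4 2 (by omega) X4 hX4m Y2 hY2m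
  have bX4Y3 : S.A.bk X4 Y3 = 0 := z01 4 3 (by omega) X4 hX4m Y3 hY3m
  have bX5y1 : S.A.bk X5 y1 = 0 := z01 5 1 (by omega) X5 hX5m y1 hy1
  have bX5Y2 : S.A.bk X5 Y2 = 0 := z01 5 2 (by omega) X5 hX5m Y2 hY2m
  have bX5Y3 : S.A.bk X5 Y3 = 0 := z01 5 3 (by omega) X5 hX5m Y3 hY3m
  have bX6y1 : S.A.bk X6 y1 = 0 := z01 6 1 (by omega) X6 hX6m y1 hy1
  have bX6Y2 : S.A.bk X6 Y2 = 0 := z01 6 2 (by omega) X6 hX6m Y2 hY2m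
  have bX6Y3 : S.A.bk X6 Y3 = 0 := z01 6 3 (by omega) X6 hX6m Y3 hY3m
  have bw2V1 : S.A.bk w2 V1 = 0 := flip0 V1 w2 hV1g hw2g bV1w2
  have bX3V1 : S.A.bk X3 V1 = 0 := flip0 V1 X3 hV1g hX3g bV1X3
  have bX4V1 : S.A.bk X4 V1 = 0 := flip0 V1 X4 hV1g hX4g bV1X4
  have bX5V1 : S.A.bk X5 V1 = 0 := flip0 V1 X5 hV1g hX5g bV1X5
  have bX6V1 : S.A.bk X6 V1 = 0 := flip0 V1 X6 hV1g hX6g bV1X6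
  have bX3w2 : S.A.bk X3 w2 = 0 := flip0 w2 X3 hw2g hX3g bw2X3
  have bX4w2 : S.A.bk X4 w2 = 0 := flip0 w2 X4 hw2g hX4g bw2X4
  have bX5w2 : S.A.bk X5 w2 = 0 := flip0 w2 X5 hw2g hX5g bw2X5
  have bX6w2 : S.A.bk X6 w2 = 0 := flip0 w2 X6 hw2g hX6g bw2X6
  have bX5X3 : S.A.bk X5 X3 = 0 := flip0 X3 X5 hX3g hX5g bX3X5
  have bX6X3 : S.A.bk X6 X3 = 0 := flip0 X3 X6 hX3g hX6g bX3X6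
  have bX5X4 : S.A.bk X5 X4 = 0 := flip0 X4 X5 hX4g hX5g bX4X5
  have bX6X4 : S.A.bk X6 X4 = 0 := flip0 X4 X6 hX4g hX6g bX4X6
  have bX6X5 : S.A.bk X6 X5 = 0 := flip0 X5 X6 hX5g hX6g bX5X6
  have bX3X4 : S.A.bk X3 X4 = 0 := h34
  have bX4X3 : S.A.bk X4 X3 = 0 := h43
  have bV1X0 : S.A.bk V1 X0 = -w2 := by rw [S.bk_skew00 hV1g hX0g, bX0V1]
  have bw2X0 : S.A.bk w2 X0 = -X3 := by rw [S.bk_skew00 hw2g hX0g, bX0w2]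
  have bX3X0 : S.A.bk X3 X0 = -X4 := by rw [S.bk_skew00 hX3g hX0g, bX0X3]
  have bX4X0 : S.A.bk X4 X0 = -X5 := by rw [S.bk_skew00 hX4g hX0g, bX0X4]
  have bX5X0 : S.A.bk X5 X0 = -X6 := by rw [S.bk_skew00 hX5g hX0g, bX0X5]
  have bX6X0 : S.A.bk X6 X0 = 0 := flip0 X0 X6 hX0g hX6g zX06
  have bY11 : S.A.bk y1 y1 = (6*ff) • w2 := by rw [hfa, vfa]
  have bY12 : S.A.bk y1 Y2 = (3*ff) • X3 := by rw [hfb, vfb]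
  have bY13 : S.A.bk y1 Y3 = ff • X4 := by rw [hfd, vfd]
  have bY22 : S.A.bk Y2 Y2 = (2*ff) • X4 := by rw [hfc, vfc]
  have bY23 : S.A.bk Y2 Y3 = ff • X5 := by rw [hfe, vfe]
  have bY33 : S.A.bk Y3 Y3 = ff • X6 := hff
  have bY21 : S.A.bk Y2 y1 = (3*ff) • X3 := by rw [← S.bk_symm11 hY1g hY2g, bY12]
  have bY31 : S.A.bk Y3 y1 = ff • X4 := by rw [← S.bk_symm11 hY1g hY3g, bY13]
  have bY32 : S.A.bk Y3 Y2 = ff • X5 := by rw [← S.bk_symm11 hY2g hY3g, bY23]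
  -- the final basis functions
  set XF : ℕ → V := fun n => if n = 0 then X0 else if n = 1 then ff • V1
    else if n = 2 then ff • w2 else if n = 3 then ff • X3 else if n = 4 then ff • X4
    else if n = 5 then ff • X5 else if n = 6 then ff • X6 else 0 with hXFdef
  set YF : ℕ → V := fun n => if n = 1 then y1 else if n = 2 then Y2
    else if n = 3 then Y3 else 0 with hYFdef
  have eX0 : XF 0 = X0 := rfl
  have eX1 : XF 1 = ff • V1 := rfl
  have eX2 : XF 2 = ff • w2 := rfl
  have eX3 : XF 3 = ff • X3 := rfl
  have eX4 : XF 4 = ff • X4 := rfl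
  have eX5 : XF 5 = ff • X5 := rfl
  have eX6 : XF 6 = ff • X6 := rfl
  have eY1 : YF 1 = y1 := rfl
  have eY2 : YF 2 = Y2 := rfl
  have eY3 : YF 3 = Y3 := rfl
  have sp01 : S.W 0 1 = Submodule.span ℂ {X0, v} :=
    S.span_pair_W01 hX0 hv (by rw [hX0v]; exact hw20)
  have hVrank : finrank ℂ V = 10 := by
    have h := Submodule.finrank_add_eq_of_isCompl S.A.compl
    rw [S.hg0, S.hg1] at h
    omega
  have htop : ⊤ ≤ Submodule.span ℂ (Set.range
      (Sum.elim (fun i : Fin (6+1) => XF i.val) (fun j : Fin 3 => YF (j.val + 1)))) := by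
    set sS := Submodule.span ℂ (Set.range
      (Sum.elim (fun i : Fin (6+1) => XF i.val) (fun j : Fin 3 => YF (j.val + 1)))) with hsS
    have hmX : ∀ i : Fin (6+1), XF i.val ∈ sS := fun i => Submodule.subset_span ⟨Sum.inl i, rfl⟩
    have hmY : ∀ j : Fin 3, YF (j.val + 1) ∈ sS := fun j => Submodule.subset_span ⟨Sum.inr j, rfl⟩
    have m0 : X0 ∈ sS := hmX 0
    have m1 : ff • V1 ∈ sS := hmX 1
    have m2 : ff • w2 ∈ sS := hmX 2
    have m3 : ff • X3 ∈ sS := hmX 3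
    have m4 : ff • X4 ∈ sS := hmX 4
    have m5 : ff • X5 ∈ sS := hmX 5
    have m6 : ff • X6 ∈ sS := hmX 6
    have n1 : y1 ∈ sS := hmY 0
    have n2 : Y2 ∈ sS := hmY 1
    have n3 : Y3 ∈ sS := hmY 2
    have unscale : ∀ x : V, ff • x ∈ sS → x ∈ sS := by
      intro x hx
      have h' := Submodule.smul_mem sS ff⁻¹ hx
      rwa [smul_smul, inv_mul_cancel₀ hff0, one_smul] at h'
    have m1' : V1 ∈ sS := unscale _ m1
    have m2' : w2 ∈ sS := unscale _ m2
    have m3' : X3 ∈ sS := unscale _ m3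
    have m4' : X4 ∈ sS := unscale _ m4
    have m5' : X5 ∈ sS := unscale _ m5
    have m6' : X6 ∈ sS := unscale _ m6
    have mv : v ∈ sS := by
      have hve : v = V1 + t2 • X0 := by rw [hV1def]; abel
      rw [hve]
      exact add_mem m1' (Submodule.smul_mem _ _ m0)
    refine le_trans (le_of_eq (S.A.compl.sup_eq_top).symm) (sup_le ?_ ?_)
    · rw [S.g0_decomp]
      refine sup_le ?_ (sup_le ?_ (sup_le ?_ (sup_le ?_ (sup_le ?_ ?_))))
      · rw [sp01]
        refine Submodule.span_le.2 ?_
        rintro x (rfl | rfl)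
        · exact m0
        · exact mv
      · rw [span_eq_one_dim d02 hw2 hw20]
        exact (Submodule.span_singleton_le_iff_mem _ _).mpr m2'
      · rw [span_eq_one_dim d03 hX3m hX30]
        exact (Submodule.span_singleton_le_iff_mem _ _).mpr m3'
      · rw [span_eq_one_dim d04 hX4m hX40]
        exact (Submodule.span_singleton_le_iff_mem _ _).mpr m4'
      · rw [span_eq_one_dim d05 hX5m hX50]
        exact (Submodule.span_singleton_le_iff_mem _ _).mpr m5'
      · rw [span_eq_one_dim d06 hX6m hX60]
        exact (Submodule.span_singleton_le_iff_mem _ _).mpr m6'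
    · rw [S.g1_decomp]
      refine sup_le ?_ (sup_le ?_ ?_)
      · rw [span_eq_one_dim d11 hy1 hy10]
        exact (Submodule.span_singleton_le_iff_mem _ _).mpr n1
      · rw [span_eq_one_dim d12 hY2m hY20]
        exact (Submodule.span_singleton_le_iff_mem _ _).mpr n2
      · rw [span_eq_one_dim d13 hY3m hY30]
        exact (Submodule.span_singleton_le_iff_mem _ _).mpr n3
  refine ⟨XF, YF, ⟨?_, ?_, ?_, ?_⟩, ?_, ?_, ?_⟩
  · intro i hi
    interval_cases i
    exacts [hX0g, Submodule.smul_mem _ _ hV1g, Submodule.smul_mem _ _ hw2g,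
      Submodule.smul_mem _ _ hX3g, Submodule.smul_mem _ _ hX4g,
      Submodule.smul_mem _ _ hX5g, Submodule.smul_mem _ _ hX6g]
  · intro j hj1 hj3
    interval_cases j
    exacts [hY1g, hY2g, hY3g]
  · exact linearIndependent_of_top_le_span_of_card_eq_finrank htop (by simp [hVrank])
  · exact eq_top_iff.mpr htop
  · intro i j hi hj
    interval_cases i <;> interval_cases j <;>
      norm_num [eX0, eX1, eX2, eX3, eX4, eX5, eX6, map_smul, LinearMap.smul_apply,
        smul_smul, smul_neg, smul_zero, hX0X0, bX0V1, bX0w2, bX0X3, bX0X4, bX0X5, zX06,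
        bV1X0, bV1V1, bV1w2, bV1X3, bV1X4, bV1X5, bV1X6, bw2X0, bw2V1, bw2w2, bw2X3,
        bw2X4, bw2X5, bw2X6, bX3X0, bX3V1, bX3w2, bX3X3, bX3X4, bX3X5, bX3X6, bX4X0,
        bX4V1, bX4w2, bX4X3, bX4X4, bX4X5, bX4X6, bX5X0, bX5V1, bX5w2, bX5X3, bX5X4,
        bX5X5, bX5X6, bX6X0, bX6V1, bX6w2, bX6X3, bX6X4, bX6X5, bX6X6]
  · intro i j hi hj1 hj3
    interval_cases i <;> interval_cases j <;>
      norm_num [eX0, eX1, eX2, eX3, eX4, eX5, eX6, eY1, eY2, eY3, map_smul,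
        LinearMap.smul_apply, smul_zero, bX0y1, bX0Y2, zX0Y3, bV1y1, bV1Y2, bV1Y3,
        bw2y1, bw2Y2, bw2Y3, bX3y1, bX3Y2, bX3Y3, bX4y1, bX4Y2, bX4Y3, bX5y1, bX5Y2,
        bX5Y3, bX6y1, bX6Y2, bX6Y3]
  · intro i j h1 h2 h3 h4
    interval_cases i <;> interval_cases j <;>
      norm_num [eY1, eY2, eY3, eX2, eX3, eX4, eX5, eX6, bY11, bY12, bY13, bY21, bY22,
        bY23, bY31, bY32, bY33, smul_smul]


end FD

end GSetup

end Aux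


/-- Every non-degenerate naturally graded filiform Lie superalgebra with
`dim g₀ = 7` and `dim g₁ = 3` is isomorphic to `L^{6,3} + φ̄₃₆`. -/
theorem stmt9 {V : Type*} [AddCommGroup V] [Module ℂ V] [FiniteDimensional ℂ V] (A : LieSuperAlg V)
    (hfil : A.IsFiliform 6 3) (hnd : A.NonDegenerate) (hng : A.NaturallyGraded) :
    ∃ X Y : ℕ → V, A.IsAdaptedBasis 6 3 X Y ∧
    (∀ i j : ℕ, i ≤ 6 → j ≤ 6 → A.bk (X i) (X j) =
      if i = 0 ∧ 1 ≤ j ∧ j ≤ 5 then X (j + 1)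
      else if j = 0 ∧ 1 ≤ i ∧ i ≤ 5 then -X (i + 1) else 0) ∧
    (∀ i j : ℕ, i ≤ 6 → 1 ≤ j → j ≤ 3 → A.bk (X i) (Y j) =
      if i = 0 ∧ j ≤ 2 then Y (j + 1) else 0) ∧
    (∀ i j : ℕ, 1 ≤ i → i ≤ 3 → 1 ≤ j → j ≤ 3 → A.bk (Y i) (Y j) =
      if i = 1 ∧ j = 1 then (6 : ℂ) • X 2
      else if (i = 1 ∧ j = 2) ∨ (i = 2 ∧ j = 1) then (3 : ℂ) • X 3
      else if (i = 1 ∧ j = 3) ∨ (i = 3 ∧ j = 1) then X 4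
      else if i = 2 ∧ j = 2 then (2 : ℂ) • X 4
      else if (i = 2 ∧ j = 3) ∨ (i = 3 ∧ j = 2) then X 5
      else if i = 3 ∧ j = 3 then X 6 else 0) := by
  obtain ⟨-, hg0, hg1, hC05, hC12, hC06, hC13⟩ := hfil
  obtain ⟨W, -, hWC, hWd, hWb⟩ := hng
  norm_num at hC05 hC12 hg0
  exact GSetup.main ⟨A, W, hWC, hWd, hWb, hC05, hC06, hC12, hC13, hg0, hg1⟩ hnd
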